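/- Suppose asset j is dominant, and assume the high-frequency maximality property holds: g_n(K') ≤ g_1* for every n ≥ 1 and every K' ∈ 𝒦, where g_1* = E[log(1 + X_j(0))]. Then for every K ∈ 𝒦 with K_j > 0 and every n ≥ 1, the optimality gap satisfies 0 ≤ g_1* − g_n(K) ≤ (1/n)·( log(1/K_j) − 1 + K_j·E[ R_{n,j} / (Kᵀ R_n) ] ); consequently lim_{n → ∞} g_n(K) = g_1*. -/

import Mathlib

open MeasureTheory ProbabilityTheory Filter Topology Finset Real

/-- Compound (total) return of asset `i` over the first `n` periods:
`R_{n,i}(ω) = ∏_{k=0}^{n-1} (1 + X_i(k)(ω))`. -/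
noncomputable def compoundReturn {Ω : Type*} {m : ℕ} (X : ℕ → Ω → Fin m → ℝ)
    (n : ℕ) (ω : Ω) (i : Fin m) : ℝ :=
  ∏ k ∈ Finset.range n, (1 + X k ω i)

/-- Expected logarithmic growth with rebalancing period `n`:
`g_n(K) = (1/n) E[log (Kᵀ R_n)]`. -/
noncomputable def elg {Ω : Type*} [MeasureSpace Ω] {m : ℕ} (X : ℕ → Ω → Fin m → ℝ)
    (n : ℕ) (K : Fin m → ℝ) : ℝ :=
  (n : ℝ)⁻¹ * ∫ ω, Real.log (∑ i, K i * compoundReturn X n ω i)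

/-- The admissible set: the unit simplex in `ℝ^m`. -/
def simplex (m : ℕ) : Set (Fin m → ℝ) := {K | (∀ i, 0 ≤ K i) ∧ ∑ i, K i = 1}

/-!
Almost surely `Kᵀ R_n ≥ K_j R_{n,j} > 0`, so `R_{n,j} / (Kᵀ R_n) ≤ 1 / K_j`. Integrating the
tangent-line bound `log x ≤ log (1 / c) - 1 + c x` of the concave logarithm at
`x = R_{n,j} / (Kᵀ R_n)`, `c = K_j` bounds `n (g_1^* - g_n(K)) = E[log R_{n,j}] - E[log (Kᵀ R_n)]`,
where `E[log R_{n,j}] = n g_1^*` because the `X(k)` are identically distributed. Hence the gap is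
at most `log (1 / K_j) / n`, and high-frequency maximality makes it nonnegative.
-/

theorem Real.log_le_log_one_div_sub_one_add_mul {c x : ℝ} (hc : 0 < c) (hx : 0 < x) :
    log x ≤ log (1 / c) - 1 + c * x := by
  have h := log_le_sub_one_of_pos (mul_pos hc hx)
  rw [log_mul hc.ne' hx.ne'] at h
  rw [one_div, log_inv]
  linarith

theorem MeasureTheory.Integrable.log_of_ae_mem_Icc {α : Type*} [MeasurableSpace α]
    {μ : Measure α} [IsFiniteMeasure μ] {f : α → ℝ} {a b : ℝ} (hf : AEMeasurable f μ)
    (ha : 0 < a) (h : ∀ᵐ x ∂μ, f x ∈ Set.Icc a b) : Integrable (fun x => log (f x)) μ :=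
  .of_mem_Icc (log a) (log b) hf.log <|
    h.mono fun _ hx => ⟨log_le_log ha hx.1, log_le_log (ha.trans_le hx.1) hx.2⟩

/-- `Kᵀ R_n`, the `n`-period return of the buy-and-hold portfolio `K`. -/
noncomputable def portfolioReturn {Ω : Type*} {m : ℕ} (X : ℕ → Ω → Fin m → ℝ) (n : ℕ)
    (K : Fin m → ℝ) (ω : Ω) : ℝ :=
  ∑ i, K i * compoundReturn X n ω i

section Pointwise

variable {Ω : Type*} {m : ℕ} {X : ℕ → Ω → Fin m → ℝ} {ω : Ω}

theorem compoundReturn_mem_Icc {i : Fin m} {a b : ℝ} (ha : 0 ≤ a)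
    (h : ∀ k, 1 + X k ω i ∈ Set.Icc a b) (n : ℕ) :
    compoundReturn X n ω i ∈ Set.Icc (a ^ n) (b ^ n) := by
  unfold compoundReturn
  constructor
  · simpa using Finset.prod_le_prod (s := range n) (fun _ _ => ha) (fun k _ => (h k).1)
  · simpa using Finset.prod_le_prod (s := range n) (fun k _ => ha.trans (h k).1)
      (fun k _ => (h k).2)

theorem log_compoundReturn {i : Fin m} (h : ∀ k, 0 < 1 + X k ω i) (n : ℕ) :
    log (compoundReturn X n ω i) = ∑ k ∈ range n, log (1 + X k ω i) :=
  log_prod fun k _ => (h k).ne'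

theorem mul_compoundReturn_le_portfolioReturn {n : ℕ} {K : Fin m → ℝ} (hK : ∀ i, 0 ≤ K i)
    (hR : ∀ i, 0 ≤ compoundReturn X n ω i) (j : Fin m) :
    K j * compoundReturn X n ω j ≤ portfolioReturn X n K ω :=
  Finset.single_le_sum (f := fun i => K i * compoundReturn X n ω i)
    (fun i _ => mul_nonneg (hK i) (hR i)) (mem_univ j)

theorem portfolioReturn_le {n : ℕ} {K B : Fin m → ℝ} (hK : ∀ i, 0 ≤ K i)
    (hR : ∀ i, compoundReturn X n ω i ≤ B i) :
    portfolioReturn X n K ω ≤ ∑ i, K i * B i :=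
  Finset.sum_le_sum fun i _ => mul_le_mul_of_nonneg_left (hR i) (hK i)

end Pointwise

section Bounded

variable {Ω : Type*} [MeasureSpace Ω] {m : ℕ} {X : ℕ → Ω → Fin m → ℝ} {Xmin Xmax : Fin m → ℝ}

theorem aemeasurable_compoundReturn (hX : ∀ k, AEMeasurable (X k)) (n : ℕ) (i : Fin m) :
    AEMeasurable (fun ω => compoundReturn X n ω i) := by
  unfold compoundReturn
  fun_prop

theorem aemeasurable_portfolioReturn (hX : ∀ k, AEMeasurable (X k)) (n : ℕ) (K : Fin m → ℝ) :
    AEMeasurable (portfolioReturn X n K) := by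
  have := aemeasurable_compoundReturn hX n
  unfold portfolioReturn
  fun_prop

theorem ae_one_add_mem_Icc (hbdd : ∀ᵐ ω, ∀ k i, X k ω i ∈ Set.Icc (Xmin i) (Xmax i)) :
    ∀ᵐ ω, ∀ k i, 1 + X k ω i ∈ Set.Icc (1 + Xmin i) (1 + Xmax i) :=
  hbdd.mono fun _ h k i => ⟨by linarith [(h k i).1], by linarith [(h k i).2]⟩

variable (hXmin : ∀ i, -1 < Xmin i) (hbdd : ∀ᵐ ω, ∀ k i, X k ω i ∈ Set.Icc (Xmin i) (Xmax i))
include hXmin hbdd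

theorem ae_compoundReturn_mem_Icc :
    ∀ᵐ ω, ∀ n i, compoundReturn X n ω i ∈ Set.Icc ((1 + Xmin i) ^ n) ((1 + Xmax i) ^ n) :=
  (ae_one_add_mem_Icc hbdd).mono fun _ h n i =>
    compoundReturn_mem_Icc (by linarith [hXmin i]) (fun k => h k i) n

theorem integrable_log_compoundReturn [IsFiniteMeasure (ℙ : Measure Ω)]
    (hX : ∀ k, AEMeasurable (X k)) (n : ℕ) (i : Fin m) :
    Integrable fun ω => log (compoundReturn X n ω i) :=
  .log_of_ae_mem_Icc (aemeasurable_compoundReturn hX n i) (pow_pos (by linarith [hXmin i]) n)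
    ((ae_compoundReturn_mem_Icc hXmin hbdd).mono fun _ h => h n i)

theorem integral_log_compoundReturn [IsProbabilityMeasure (ℙ : Measure Ω)]
    (hident : ∀ k, IdentDistrib (X k) (X 0) ℙ ℙ)
    (n : ℕ) (i : Fin m) :
    ∫ ω, log (compoundReturn X n ω i) = n * ∫ ω, log (1 + X 0 ω i) := by
  have hpos : ∀ᵐ ω, ∀ k, 0 < 1 + X k ω i := (ae_one_add_mem_Icc hbdd).mono
    fun _ h k => by linarith [hXmin i, (h k i).1]
  have hint : ∀ k, Integrable fun ω => log (1 + X k ω i) := fun k =>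
    .log_of_ae_mem_Icc (by have := (hident k).aemeasurable_fst; fun_prop)
      (by linarith [hXmin i]) ((ae_one_add_mem_Icc hbdd).mono fun _ h => h k i)
  have hlaw : ∀ k, ∫ ω, log (1 + X k ω i) = ∫ ω, log (1 + X 0 ω i) := fun k =>
    ((hident k).comp (u := fun v : Fin m → ℝ => log (1 + v i)) (by fun_prop)).integral_eq
  calc ∫ ω, log (compoundReturn X n ω i)
      = ∫ ω, ∑ k ∈ range n, log (1 + X k ω i) :=
        integral_congr_ae (hpos.mono fun _ h => log_compoundReturn h n)
    _ = ∑ k ∈ range n, ∫ ω, log (1 + X k ω i) := integral_finsetSum _ fun k _ => hint k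
    _ = n * ∫ ω, log (1 + X 0 ω i) := by simp [hlaw]

end Bounded

section Portfolio

variable {Ω : Type*} [MeasureSpace Ω] {m : ℕ}
  {X : ℕ → Ω → Fin m → ℝ} {Xmin Xmax : Fin m → ℝ} (hXmin : ∀ i, -1 < Xmin i)
  (hbdd : ∀ᵐ ω, ∀ k i, X k ω i ∈ Set.Icc (Xmin i) (Xmax i))
  {K : Fin m → ℝ} (hK : ∀ i, 0 ≤ K i) {j : Fin m} (hKj : 0 < K j) (n : ℕ)
include hXmin hbdd hK hKj

theorem ae_mul_compoundReturn_le_portfolioReturn :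
    ∀ᵐ ω, K j * (1 + Xmin j) ^ n ≤ K j * compoundReturn X n ω j ∧
      K j * compoundReturn X n ω j ≤ portfolioReturn X n K ω :=
  (ae_compoundReturn_mem_Icc hXmin hbdd).mono fun _ h =>
    ⟨mul_le_mul_of_nonneg_left (h n j).1 hKj.le, mul_compoundReturn_le_portfolioReturn hK
      (fun i => (pow_nonneg (by linarith [hXmin i]) n).trans (h n i).1) j⟩

theorem ae_compoundReturn_div_portfolioReturn_mem_Ioc :
    ∀ᵐ ω, compoundReturn X n ω j / portfolioReturn X n K ω ∈ Set.Ioc 0 (1 / K j) := by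
  filter_upwards [ae_mul_compoundReturn_le_portfolioReturn hXmin hbdd hK hKj n] with ω h
  have hR : 0 < compoundReturn X n ω j :=
    pos_of_mul_pos_right ((mul_pos hKj (pow_pos (by linarith [hXmin j]) n)).trans_le h.1) hKj.le
  have hS : 0 < portfolioReturn X n K ω := (mul_pos hKj hR).trans_le h.2
  refine ⟨div_pos hR hS, ?_⟩
  rw [div_le_div_iff₀ hS hKj, one_mul, mul_comm]
  exact h.2

variable [IsProbabilityMeasure (ℙ : Measure Ω)]

theorem integrable_log_portfolioReturn (hX : ∀ k, AEMeasurable (X k)) :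
    Integrable fun ω => log (portfolioReturn X n K ω) := by
  refine .log_of_ae_mem_Icc (a := K j * (1 + Xmin j) ^ n) (b := ∑ i, K i * (1 + Xmax i) ^ n)
    (aemeasurable_portfolioReturn hX n K) (mul_pos hKj (pow_pos (by linarith [hXmin j]) n)) ?_
  filter_upwards [ae_mul_compoundReturn_le_portfolioReturn hXmin hbdd hK hKj n,
    ae_compoundReturn_mem_Icc hXmin hbdd] with ω hlow hup
  exact ⟨hlow.1.trans hlow.2, portfolioReturn_le hK fun i => (hup n i).2⟩

theorem integrable_compoundReturn_div_portfolioReturn (hX : ∀ k, AEMeasurable (X k)) :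
    Integrable fun ω => compoundReturn X n ω j / portfolioReturn X n K ω :=
  .of_mem_Icc 0 (1 / K j)
    ((aemeasurable_compoundReturn hX n j).div (aemeasurable_portfolioReturn hX n K))
    ((ae_compoundReturn_div_portfolioReturn_mem_Ioc hXmin hbdd hK hKj n).mono
      fun _ h => Set.Ioc_subset_Icc_self h)

theorem integral_compoundReturn_div_portfolioReturn_le (hX : ∀ k, AEMeasurable (X k)) :
    ∫ ω, compoundReturn X n ω j / portfolioReturn X n K ω ≤ 1 / K j := by
  simpa using integral_mono_ae
    (integrable_compoundReturn_div_portfolioReturn hXmin hbdd hK hKj n hX)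
    (integrable_const (1 / K j))
    ((ae_compoundReturn_div_portfolioReturn_mem_Ioc hXmin hbdd hK hKj n).mono fun _ h => h.2)

theorem integral_log_sub_elg_le (hident : ∀ k, IdentDistrib (X k) (X 0) ℙ ℙ) (hn : n ≠ 0) :
    (∫ ω, log (1 + X 0 ω j)) - elg X n K ≤ (n : ℝ)⁻¹ * (log (1 / K j) - 1 +
      K j * ∫ ω, compoundReturn X n ω j / portfolioReturn X n K ω) := by
  have hX k := (hident k).aemeasurable_fst
  have hratio := integrable_compoundReturn_div_portfolioReturn hXmin hbdd hK hKj n hX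
  have hpt : ∀ᵐ ω, log (compoundReturn X n ω j) - log (portfolioReturn X n K ω) ≤
      log (1 / K j) - 1 + K j * (compoundReturn X n ω j / portfolioReturn X n K ω) := by
    filter_upwards [ae_compoundReturn_div_portfolioReturn_mem_Ioc hXmin hbdd hK hKj n] with ω h
    obtain ⟨hR, hS⟩ := div_ne_zero_iff.1 h.1.ne'
    rw [← log_div hR hS]
    exact log_le_log_one_div_sub_one_add_mul hKj h.1
  have hlog : (∫ ω, log (compoundReturn X n ω j)) - ∫ ω, log (portfolioReturn X n K ω) ≤
      log (1 / K j) - 1 + K j * ∫ ω, compoundReturn X n ω j / portfolioReturn X n K ω := by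
    rw [← integral_sub (integrable_log_compoundReturn hXmin hbdd hX n j)
      (integrable_log_portfolioReturn hXmin hbdd hK hKj n hX)]
    calc _ ≤ ∫ ω, (log (1 / K j) - 1 +
            K j * (compoundReturn X n ω j / portfolioReturn X n K ω)) :=
          integral_mono_ae ((integrable_log_compoundReturn hXmin hbdd hX n j).sub
            (integrable_log_portfolioReturn hXmin hbdd hK hKj n hX))
            ((integrable_const _).add (hratio.const_mul (K j))) hpt
      _ = _ := by
          rw [integral_add (integrable_const _) (hratio.const_mul (K j)), integral_const_mul]
          simp
  have hg : ∫ ω, log (1 + X 0 ω j) = (n : ℝ)⁻¹ * ∫ ω, log (compoundReturn X n ω j) := by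
    rw [integral_log_compoundReturn hXmin hbdd hident, inv_mul_cancel_left₀ (by exact_mod_cast hn)]
  rw [hg, elg, ← mul_sub]
  exact mul_le_mul_of_nonneg_left hlog (by positivity)

theorem integral_log_sub_elg_le_log_one_div (hident : ∀ k, IdentDistrib (X k) (X 0) ℙ ℙ)
    (hn : n ≠ 0) :
    (∫ ω, log (1 + X 0 ω j)) - elg X n K ≤ (n : ℝ)⁻¹ * log (1 / K j) := by
  have hK1 : K j * ∫ ω, compoundReturn X n ω j / portfolioReturn X n K ω ≤ 1 := by
    have := mul_le_mul_of_nonneg_left (integral_compoundReturn_div_portfolioReturn_le hXmin hbdd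
      hK hKj n fun k => (hident k).aemeasurable_fst) hKj.le
    rwa [mul_one_div_cancel hKj.ne'] at this
  calc _ ≤ _ := integral_log_sub_elg_le hXmin hbdd hK hKj n hident hn
    _ ≤ (n : ℝ)⁻¹ * log (1 / K j) := by gcongr; linarith

end Portfolio

theorem improved_asymptotic_log_optimality_general
    {Ω : Type*} [MeasureSpace Ω] [IsProbabilityMeasure (ℙ : Measure Ω)]
    {m : ℕ}
    (X : ℕ → Ω → Fin m → ℝ)
    (hident : ∀ k, IdentDistrib (X k) (X 0) ℙ ℙ)
    (Xmin Xmax : Fin m → ℝ)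
    (hXmin : ∀ i, -1 < Xmin i)
    (hbdd : ∀ k, ∀ᵐ ω ∂(ℙ : Measure Ω), ∀ i, Xmin i ≤ X k ω i ∧ X k ω i ≤ Xmax i)
    (j : Fin m)
    (hmax : ∀ n : ℕ, 1 ≤ n → ∀ K' ∈ simplex m,
      elg X n K' ≤ ∫ ω, Real.log (1 + X 0 ω j))
    (K : Fin m → ℝ) (hK : K ∈ simplex m) (hKj : 0 < K j) :
    (∀ n : ℕ, 1 ≤ n →
      0 ≤ (∫ ω, Real.log (1 + X 0 ω j)) - elg X n K ∧
      (∫ ω, Real.log (1 + X 0 ω j)) - elg X n K ≤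
        (n : ℝ)⁻¹ * (Real.log (1 / K j) - 1 +
          K j * ∫ ω, compoundReturn X n ω j / ∑ i, K i * compoundReturn X n ω i)) ∧
    Tendsto (fun n : ℕ => elg X n K) atTop (𝓝 (∫ ω, Real.log (1 + X 0 ω j))) := by
  have hbdd' : ∀ᵐ ω, ∀ k i, X k ω i ∈ Set.Icc (Xmin i) (Xmax i) := ae_all_iff.2 hbdd
  have hgap_nonneg (n : ℕ) (hn : 1 ≤ n) : 0 ≤ (∫ ω, log (1 + X 0 ω j)) - elg X n K :=
    sub_nonneg.2 (hmax n hn K hK)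
  refine ⟨fun n hn => ⟨hgap_nonneg n hn,
    integral_log_sub_elg_le hXmin hbdd' hK.1 hKj n hident (by omega)⟩, ?_⟩
  have hgap : Tendsto (fun n : ℕ => (∫ ω, log (1 + X 0 ω j)) - elg X n K) atTop (𝓝 0) :=
    squeeze_zero' ((eventually_ge_atTop 1).mono hgap_nonneg)
      ((eventually_ge_atTop 1).mono fun n hn =>
        integral_log_sub_elg_le_log_one_div hXmin hbdd' hK.1 hKj n hident (by omega))
      (by simpa using tendsto_inv_atTop_nhds_zero_nat.mul_const (log (1 / K j)))
  simpa using (tendsto_const_nhds (x := ∫ ω, log (1 + X 0 ω j))).sub hgap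

/-- **Improved asymptotic log-optimality of buy and hold.** If asset `j` is dominant and the
high-frequency maximality property holds (`g_n(K') ≤ g_1^*` for all `n ≥ 1`, `K' ∈ 𝒦`), then
for every `K ∈ 𝒦` with `K_j > 0` the gap satisfies
`0 ≤ g_1^* - g_n(K) ≤ (1/n)(log(1/K_j) - 1 + K_j · E[R_{n,j}/(Kᵀ R_n)])`, and consequently
`g_n(K) → g_1^*`. -/
theorem improved_asymptotic_log_optimality
    {Ω : Type*} [MeasureSpace Ω] [IsProbabilityMeasure (ℙ : Measure Ω)]
    {m : ℕ} (hm : 2 ≤ m)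
    (X : ℕ → Ω → Fin m → ℝ)
    (hmeas : ∀ k, Measurable (X k))
    (hiid : iIndepFun X ℙ)
    (hident : ∀ k, IdentDistrib (X k) (X 0) ℙ ℙ)
    (Xmin Xmax : Fin m → ℝ)
    (hXmin : ∀ i, -1 < Xmin i)
    (hbdd : ∀ k, ∀ᵐ ω ∂(ℙ : Measure Ω), ∀ i, Xmin i ≤ X k ω i ∧ X k ω i ≤ Xmax i)
    (j : Fin m)
    (hdom : ∀ i, i ≠ j → ∫ ω, (1 + X 0 ω i) / (1 + X 0 ω j) ≤ 1)
    (hmax : ∀ n : ℕ, 1 ≤ n → ∀ K' ∈ simplex m,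
      elg X n K' ≤ ∫ ω, Real.log (1 + X 0 ω j))
    (K : Fin m → ℝ) (hK : K ∈ simplex m) (hKj : 0 < K j) :
    (∀ n : ℕ, 1 ≤ n →
      0 ≤ (∫ ω, Real.log (1 + X 0 ω j)) - elg X n K ∧
      (∫ ω, Real.log (1 + X 0 ω j)) - elg X n K ≤
        (n : ℝ)⁻¹ * (Real.log (1 / K j) - 1 +
          K j * ∫ ω, compoundReturn X n ω j / ∑ i, K i * compoundReturn X n ω i)) ∧
    Tendsto (fun n : ℕ => elg X n K) atTop (𝓝 (∫ ω, Real.log (1 + X 0 ω j))) :=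
  improved_asymptotic_log_optimality_general X hident Xmin Xmax hXmin hbdd j hmax K hK hKj
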